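/- arXiv:1801.09118 — 6 statements merged into one kernel-verified Lean document; each statement's English description precedes it below -/
import Mathlib

section
/- Let γ ∈ (0,1). For every z ∈ ℂ with Re z ≤ 0, the denominator of the TR-BDF2 stability function does not vanish: γ(1−γ)z² + (γ²−2)z + 2(2−γ) ≠ 0. -/
/-! Multiplying a root `z ≠ 0` of `a z² + b z + c` by `conj z` and taking real parts gives
`(a |z|² + c) Re z + b |z|² = 0`, impossible when `a ≥ 0`, `b < 0`, `c > 0` and `Re z ≤ 0`. -/

open ComplexConjugate

namespace Complex

theorem re_quadratic_mul_conj (a b c : ℝ) (z : ℂ) :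
    ((a * z ^ 2 + b * z + c) * conj z).re = (a * normSq z + c) * z.re + b * normSq z := by
  simp only [mul_re, add_re, add_im, mul_im, pow_two, ofReal_re, ofReal_im, conj_re, conj_im,
    normSq_apply]
  ring

theorem quadratic_ne_zero_of_re_nonpos {a b c : ℝ} (ha : 0 ≤ a) (hb : b < 0) (hc : 0 < c)
    {z : ℂ} (hz : z.re ≤ 0) : (a : ℂ) * z ^ 2 + b * z + c ≠ 0 := by
  rcases eq_or_ne z 0 with rfl | hz0
  · simpa using hc.ne'
  intro h
  have hre : (a * normSq z + c) * z.re + b * normSq z = 0 := by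
    rw [← re_quadratic_mul_conj, h, zero_mul, zero_re]
  have hnorm : 0 < normSq z := normSq_pos.2 hz0
  linarith [mul_nonpos_of_nonneg_of_nonpos (by positivity : 0 ≤ a * normSq z + c) hz,
    mul_neg_of_neg_of_pos hb hnorm]

end Complex

/-- For `γ ∈ (0,1)` the denominator of the TR-BDF2 stability function does not
vanish in the closed left half-plane. -/
theorem trbdf2_denominator_ne_zero (γ : ℝ) (hγ : γ ∈ Set.Ioo (0 : ℝ) 1)
    (z : ℂ) (hz : z.re ≤ 0) :
    (γ : ℂ) * (1 - γ) * z ^ 2 + ((γ : ℂ) ^ 2 - 2) * z + 2 * (2 - γ) ≠ 0 := by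
  obtain ⟨hγ0, hγ1⟩ := hγ
  have h := Complex.quadratic_ne_zero_of_re_nonpos (a := γ * (1 - γ)) (b := γ ^ 2 - 2)
    (c := 2 * (2 - γ)) (by nlinarith) (by nlinarith) (by linarith) hz
  push_cast at h
  exact h
end

section
/- Let γ = 2 − √2. For every z ∈ ℂ with Re z ≤ 0, one has |(1+(1−γ)²)z + 2(2−γ)| ≤ |γ(1−γ)z² + (γ²−2)z + 2(2−γ)|; equivalently, the TR-BDF2 stability function satisfies |R(z)| ≤ 1 on the closed left half-plane (A-stability of TR-BDF2 for γ = 2 − √2). -/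
/-!
With `z = x + iy`, the difference `|D(z)|² - |N(z)|²` of the squared moduli of denominator and
numerator is a polynomial in `x` and `|z|²` whose `|z|²`-coefficient vanishes identically in `γ`
(the method has order two). For `0 ≤ γ ≤ 1` every remaining monomial is nonnegative once `x ≤ 0`,
and `γ = 2 - √2` lies in that range.
-/

namespace TRBDF2

def numerator (γ : ℝ) (z : ℂ) : ℂ :=
  (1 + (1 - (γ : ℂ)) ^ 2) * z + 2 * (2 - (γ : ℂ))

def denominator (γ : ℝ) (z : ℂ) : ℂ :=
  (γ : ℂ) * (1 - (γ : ℂ)) * z ^ 2 + ((γ : ℂ) ^ 2 - 2) * z + 2 * (2 - (γ : ℂ))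

theorem normSq_denominator_sub_normSq_numerator (γ : ℝ) (z : ℂ) :
    Complex.normSq (denominator γ z) - Complex.normSq (numerator γ z) =
      (γ * (1 - γ)) ^ 2 * Complex.normSq z ^ 2
        + 2 * (γ * (1 - γ)) * (2 - γ ^ 2) * -z.re * Complex.normSq z
        + 8 * (γ * (1 - γ)) * (2 - γ) * z.re ^ 2 + 8 * (2 - γ) ^ 2 * -z.re := by
  simp only [denominator, numerator, Complex.normSq_apply, Complex.add_re, Complex.add_im,
    Complex.mul_re, Complex.mul_im, Complex.sub_re, Complex.sub_im, Complex.one_re,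
    Complex.one_im, Complex.ofReal_re, Complex.ofReal_im, sq]
  norm_num
  ring

theorem normSq_numerator_le_normSq_denominator {γ : ℝ} (hγ : γ ∈ Set.Icc 0 1) {z : ℂ}
    (hz : z.re ≤ 0) : Complex.normSq (numerator γ z) ≤ Complex.normSq (denominator γ z) := by
  obtain ⟨hγ₀, hγ₁⟩ := hγ
  have ha : 0 ≤ γ * (1 - γ) := mul_nonneg hγ₀ (by linarith)
  have hb : 0 ≤ 2 - γ ^ 2 := by nlinarith
  have hc : 0 ≤ 2 - γ := by linarith
  have hx : 0 ≤ -z.re := neg_nonneg.mpr hz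
  rw [← sub_nonneg, normSq_denominator_sub_normSq_numerator]
  refine add_nonneg (add_nonneg (add_nonneg (by positivity) ?_) ?_) (by positivity)
  · exact mul_nonneg (mul_nonneg (mul_nonneg (mul_nonneg zero_le_two ha) hb) hx)
      (Complex.normSq_nonneg z)
  · exact mul_nonneg (mul_nonneg (mul_nonneg (by norm_num) ha) hc) (sq_nonneg _)

theorem norm_numerator_le_norm_denominator {γ : ℝ} (hγ : γ ∈ Set.Icc 0 1) {z : ℂ}
    (hz : z.re ≤ 0) : ‖numerator γ z‖ ≤ ‖denominator γ z‖ := by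
  rw [← sq_le_sq₀ (norm_nonneg _) (norm_nonneg _), Complex.sq_norm, Complex.sq_norm]
  exact normSq_numerator_le_normSq_denominator hγ hz

end TRBDF2

theorem two_sub_sqrt_two_mem_Icc : 2 - Real.sqrt 2 ∈ Set.Icc (0 : ℝ) 1 := by
  have h2 : Real.sqrt 2 ^ 2 = 2 := Real.sq_sqrt (by norm_num)
  have h0 : 0 ≤ Real.sqrt 2 := Real.sqrt_nonneg 2
  constructor <;> nlinarith

/-- A-stability of TR-BDF2 for `γ = 2 − √2`: on the closed left half-plane the
modulus of the numerator of the stability function is bounded by the modulus of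
the denominator, i.e. `|R(z)| ≤ 1`. -/
theorem trbdf2_A_stability (γ : ℝ) (hγ : γ = 2 - Real.sqrt 2)
    (z : ℂ) (hz : z.re ≤ 0) :
    ‖(1 + (1 - (γ : ℂ)) ^ 2) * z + 2 * (2 - (γ : ℂ))‖ ≤
      ‖(γ : ℂ) * (1 - (γ : ℂ)) * z ^ 2 + ((γ : ℂ) ^ 2 - 2) * z + 2 * (2 - (γ : ℂ))‖ :=
  TRBDF2.norm_numerator_le_norm_denominator (hγ ▸ two_sub_sqrt_two_mem_Icc) hz
end

section
/- Let γ = 2 − √2 and let R(z) = ((1+(1−γ)²)z + 2(2−γ)) / (γ(1−γ)z² + (γ²−2)z + 2(2−γ)). Then (R(z) − exp(z))/z² tends to 0 as z → 0 in ℂ \ {0}; that is, R(z) agrees with the exponential up to an error O(z³), expressing the second-order accuracy of the TR-BDF2 method. -/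
/-!
Write `R = P / Q`. For every `γ`, the polynomial `P − Q · (1 + z + z²/2)` has vanishing
coefficients of `1`, `z` and `z²`, so `R` agrees with the second Taylor polynomial of `exp` up to
`O(z³)` as soon as `Q(0) = 2(2 − γ) ≠ 0`; for `γ = 2 − √2` this holds since `√2 ≠ 0`.
-/

open Filter Asymptotics Topology

noncomputable def trbdf2Denom (γ z : ℂ) : ℂ :=
  γ * (1 - γ) * z ^ 2 + (γ ^ 2 - 2) * z + 2 * (2 - γ)

noncomputable def trbdf2Stability (γ z : ℂ) : ℂ :=
  ((1 + (1 - γ) ^ 2) * z + 2 * (2 - γ)) / trbdf2Denom γ z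

lemma trbdf2Stability_sub_taylor {γ z : ℂ} (hz : trbdf2Denom γ z ≠ 0) :
    trbdf2Stability γ z - (1 + z + z ^ 2 / 2) =
      z ^ 3 * (((1 + (1 - γ) ^ 2) - γ * (1 - γ) * z) / (2 * trbdf2Denom γ z)) := by
  rw [trbdf2Stability]
  field_simp
  rw [trbdf2Denom]
  ring

lemma trbdf2Stability_sub_taylor_isBigO {γ : ℂ} (hγ : γ ≠ 2) :
    (fun z => trbdf2Stability γ z - (1 + z + z ^ 2 / 2)) =O[𝓝 0] (· ^ 3) := by
  have hcont : Continuous (trbdf2Denom γ) := by unfold trbdf2Denom; fun_prop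
  have h0 : trbdf2Denom γ 0 ≠ 0 := by
    simpa [trbdf2Denom, sub_eq_zero] using hγ.symm
  have hev : ∀ᶠ z in 𝓝 0, trbdf2Denom γ z ≠ 0 := hcont.continuousAt.eventually_ne h0
  have hbdd : (fun z => ((1 + (1 - γ) ^ 2) - γ * (1 - γ) * z) / (2 * trbdf2Denom γ z))
      =O[𝓝 0] (fun _ => (1 : ℂ)) :=
    ((Continuous.continuousAt (by fun_prop)).div (continuous_const.mul hcont).continuousAt
      (mul_ne_zero two_ne_zero h0)).tendsto.isBigO_one ℂ
  refine ((isBigO_refl (· ^ 3) _).mul hbdd).congr' ?_ (.of_forall fun z => mul_one _)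
  filter_upwards [hev] with z hz using (trbdf2Stability_sub_taylor hz).symm

lemma trbdf2Stability_sub_exp_isLittleO {γ : ℂ} (hγ : γ ≠ 2) :
    (fun z => trbdf2Stability γ z - Complex.exp z) =o[𝓝 0] (· ^ 2) := by
  have hexp : (fun z => Complex.exp z - (1 + z + z ^ 2 / 2)) =o[𝓝 0] (· ^ 2) := by
    simpa [Finset.sum_range_succ] using Complex.exp_sub_sum_range_succ_isLittleO_pow 2
  have hrat := (trbdf2Stability_sub_taylor_isBigO hγ).trans_isLittleO
    (isLittleO_pow_pow (by norm_num : 2 < 3))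
  simpa using hrat.sub hexp

/-- Second-order accuracy of TR-BDF2 on the linear test problem: for
`γ = 2 − √2`, the stability function satisfies `R(z) − e^z = o(z²)` as `z → 0`,
i.e. `(R(z) − exp z)/z²  → 0` as `z → 0`, `z ≠ 0`. -/
theorem trbdf2_second_order (γ : ℝ) (hγ : γ = 2 - Real.sqrt 2) :
    Tendsto (fun z : ℂ =>
        (((1 + (1 - (γ : ℂ)) ^ 2) * z + 2 * (2 - (γ : ℂ))) /
            ((γ : ℂ) * (1 - (γ : ℂ)) * z ^ 2 + ((γ : ℂ) ^ 2 - 2) * z + 2 * (2 - (γ : ℂ)))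
          - Complex.exp z) / z ^ 2)
      (nhdsWithin 0 {0}ᶜ) (nhds 0) := by
  have hγ_ne : (γ : ℂ) ≠ 2 := by
    rw [hγ, Ne, ← Complex.ofReal_ofNat, Complex.ofReal_inj]
    simp
  exact (trbdf2Stability_sub_exp_isLittleO hγ_ne).tendsto_div_nhds_zero.mono_left nhdsWithin_le_nhds
end

section
/- Let γ = 2 − √2, d = γ/2, w = √2/4, b*₁ = (1−w)/3, b*₂ = (3w+1)/3, b*₃ = d/3, and for real x define Rγ(x) = (2+γx)/(2−γx), R(x) = ((1+(1−γ)²)x + 2(2−γ)) / (γ(1−γ)x² + (γ²−2)x + 2(2−γ)) and R*(x) = 1 + x(b*₁ + b*₂Rγ(x) + b*₃R(x)). Then R*(x) → +∞ as x → −∞. In particular the third-order embedded companion of TR-BDF2 is not L-stable, even though TR-BDF2 itself is. -/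
/-!
Since `Rγ(x) → -1` and `R(x) → 0` like `1/x` as `x → -∞`, both `x (Rγ(x) + 1)` and `x R(x)` have
finite limits, so `R*(x) = (b*₁ - b*₂) x + O(1)`. The slope `b*₁ - b*₂ = -4w/3` is negative.
-/

open Filter Topology Bornology

section RationalLimits

variable {𝕜 : Type*} [NormedField 𝕜]

theorem tendsto_mul_div_linear_cobounded (a c e : 𝕜) (hc : c ≠ 0) :
    Tendsto (fun x => x * (a / (c * x + e))) (cobounded 𝕜) (𝓝 (a / c)) := by
  have hlim : Tendsto (fun x : 𝕜 => a / (c + e * x⁻¹)) (cobounded 𝕜) (𝓝 (a / (c + e * 0))) :=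
    tendsto_const_nhds.div (tendsto_const_nhds.add (tendsto_inv₀_cobounded.const_mul e))
      (by simpa using hc)
  rw [mul_zero, add_zero] at hlim
  refine hlim.congr' ((eventually_ne_cobounded 0).mono fun x hx => ?_)
  rw [show c + e * x⁻¹ = (c * x + e) * x⁻¹ by field_simp]
  field_simp

theorem tendsto_mul_div_quadratic_cobounded (a b p q r : 𝕜) (hp : p ≠ 0) :
    Tendsto (fun x => x * ((a * x + b) / (p * x ^ 2 + q * x + r))) (cobounded 𝕜)
      (𝓝 (a / p)) := by
  have hlim : Tendsto (fun x : 𝕜 => (a + b * x⁻¹) / (p + q * x⁻¹ + r * x⁻¹ ^ 2))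
      (cobounded 𝕜) (𝓝 ((a + b * 0) / (p + q * 0 + r * 0 ^ 2))) :=
    (tendsto_const_nhds.add (tendsto_inv₀_cobounded.const_mul b)).div
      ((tendsto_const_nhds.add (tendsto_inv₀_cobounded.const_mul q)).add
        ((tendsto_inv₀_cobounded.pow 2).const_mul r)) (by simpa using hp)
  simp only [mul_zero, add_zero, ne_eq, OfNat.ofNat_ne_zero, not_false_eq_true, zero_pow] at hlim
  refine hlim.congr' ((eventually_ne_cobounded 0).mono fun x hx => ?_)
  rw [show a + b * x⁻¹ = (a * x + b) * x⁻¹ by field_simp,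
    show p + q * x⁻¹ + r * x⁻¹ ^ 2 = (p * x ^ 2 + q * x + r) * x⁻¹ ^ 2 by field_simp,
    mul_div_mul_comm]
  field_simp

end RationalLimits

theorem trbdf2_embedded_not_L_stable_general (γ w b₁ b₂ b₃ : ℝ)
    (hγ : γ = 2 - Real.sqrt 2) (hw : w = Real.sqrt 2 / 4)
    (hb₁ : b₁ = (1 - w) / 3) (hb₂ : b₂ = (3 * w + 1) / 3)
    (Rγ R Rstar : ℝ → ℝ)
    (hRγ : ∀ x : ℝ, Rγ x = (2 + γ * x) / (2 - γ * x))
    (hR : ∀ x : ℝ, R x = ((1 + (1 - γ) ^ 2) * x + 2 * (2 - γ)) /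
        (γ * (1 - γ) * x ^ 2 + (γ ^ 2 - 2) * x + 2 * (2 - γ)))
    (hRstar : ∀ x : ℝ, Rstar x = 1 + x * (b₁ + b₂ * Rγ x + b₃ * R x)) :
    Tendsto Rstar atBot atTop := by
  have hsqrt_one : 1 < Real.sqrt 2 := by
    rw [Real.lt_sqrt zero_le_one]; norm_num
  have hsqrt_two : Real.sqrt 2 < 2 := by
    rw [Real.sqrt_lt' two_pos]; norm_num
  have hγ_pos : 0 < γ := by linarith
  have hγ_lt_one : γ < 1 := by linarith
  have hslope : b₁ - b₂ < 0 := by rw [hb₁, hb₂, hw]; linarith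
  have hRγ_lim : Tendsto (fun x => x * (Rγ x + 1)) atBot (𝓝 (4 / -γ)) := by
    refine ((tendsto_mul_div_linear_cobounded 4 (-γ) 2 (neg_ne_zero.2 hγ_pos.ne')).mono_left
      IsOrderBornology.atBot_le_cobounded).congr' ?_
    filter_upwards [eventually_lt_atBot 0] with x hx
    have hden : 2 - γ * x ≠ 0 := by nlinarith
    rw [hRγ, div_add_one hden, neg_mul, neg_add_eq_sub]
    ring
  have hR_lim : Tendsto (fun x => x * R x) atBot
      (𝓝 ((1 + (1 - γ) ^ 2) / (γ * (1 - γ)))) := by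
    simp only [hR]
    exact (tendsto_mul_div_quadratic_cobounded _ _ _ _ _
      (mul_ne_zero hγ_pos.ne' (sub_ne_zero.2 hγ_lt_one.ne'))).mono_left
        IsOrderBornology.atBot_le_cobounded
  have hsplit : Rstar = fun x =>
      (b₁ - b₂) * x + (1 + b₂ * (x * (Rγ x + 1)) + b₃ * (x * R x)) := by
    funext x; rw [hRstar]; ring
  rw [hsplit]
  exact (tendsto_id.const_mul_atBot_of_neg hslope).atTop_add
    ((tendsto_const_nhds.add (hRγ_lim.const_mul b₂)).add (hR_lim.const_mul b₃))

/-- The third-order embedded companion of TR-BDF2 is not L-stable: its real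
stability function `R*(x) = 1 + x(b*₁ + b*₂ Rγ(x) + b*₃ R(x))` tends to `+∞`
as `x → −∞`. -/
theorem trbdf2_embedded_not_L_stable (γ d w b₁ b₂ b₃ : ℝ)
    (hγ : γ = 2 - Real.sqrt 2) (hd : d = γ / 2) (hw : w = Real.sqrt 2 / 4)
    (hb₁ : b₁ = (1 - w) / 3) (hb₂ : b₂ = (3 * w + 1) / 3) (hb₃ : b₃ = d / 3)
    (Rγ R Rstar : ℝ → ℝ)
    (hRγ : ∀ x : ℝ, Rγ x = (2 + γ * x) / (2 - γ * x))
    (hR : ∀ x : ℝ, R x = ((1 + (1 - γ) ^ 2) * x + 2 * (2 - γ)) /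
        (γ * (1 - γ) * x ^ 2 + (γ ^ 2 - 2) * x + 2 * (2 - γ)))
    (hRstar : ∀ x : ℝ, Rstar x = 1 + x * (b₁ + b₂ * Rγ x + b₃ * R x)) :
    Tendsto Rstar atBot atTop :=
  trbdf2_embedded_not_L_stable_general γ w b₁ b₂ b₃ hγ hw hb₁ hb₂ Rγ R Rstar hRγ hR hRstar
end

section
/- Let m ≥ 1, h > 0, γ ∈ (0,1), and let uₙ, u_{n+γ}, u_{n+1}, zₙ, z_{n+γ}, z_{n+1} ∈ ℝᵐ. Let p be the cubic with coefficients α₀ = uₙ, α₁ = γzₙ, α₂ = u_{n+γ} − uₙ − γzₙ, α₃ = γ(z_{n+γ} − zₙ) in the variable β = ζ/(γh), and let q be the cubic with coefficients α₀ = u_{n+γ}, α₁ = (1−γ)z_{n+γ}, α₂ = u_{n+1} − u_{n+γ} − α₁, α₃ = (1−γ)(z_{n+1} − z_{n+γ}) in the variable β = (ζ−γh)/((1−γ)h), each of the form (α₃−2α₂)β³ + (3α₂−α₃)β² + α₁β + α₀. Define Q : [0,h] → ℝᵐ by Q(ζ) = p(ζ) for ζ ∈ [0, γh] and Q(ζ)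 = q(ζ) for ζ ∈ [γh, h]. Then Q is well defined (p(γh) = q(γh)) and continuously differentiable on [0,h]: there is a continuous function g on [0,h] with g = p' on [0,γh] and g = q' on [γh,h] such that Q has derivative g(ζ) at every ζ ∈ [0,h] (one-sided at the endpoints). Thus the TR-BDF2 dense-output interpolant yields globally C¹ trajectories. -/
/-!
Each piece is a rescaled cubic Hermite polynomial `H(β)` with coefficients `α₀, …, α₃`, and
`H(0) = α₀`, `H(1) = α₀ + α₁ + α₂`, `H'(0) = α₁`, `H'(1) = α₁ + α₃`. With the TR-BDF2 coefficients
both pieces therefore take the value `u_{n+γ}` and the slope `z_{n+γ} / h` at `ζ = γh`, and two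
`C¹` functions glued at a point where their values and slopes agree form a `C¹` function.
-/

open Set

section HermiteCubic

variable {E : Type*}

section Module

variable [AddCommGroup E] [Module ℝ E] (a₀ a₁ a₂ a₃ : E)

def hermiteCubic (β : ℝ) : E :=
  β ^ 3 • (a₃ - (2 : ℝ) • a₂) + β ^ 2 • ((3 : ℝ) • a₂ - a₃) + β • a₁ + a₀

def hermiteCubicDeriv (β : ℝ) : E :=
  (3 * β ^ 2) • (a₃ - (2 : ℝ) • a₂) + (2 * β) • ((3 : ℝ) • a₂ - a₃) + a₁

@[simp]
theorem hermiteCubic_zero : hermiteCubic a₀ a₁ a₂ a₃ 0 = a₀ := by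
  simp [hermiteCubic]

@[simp]
theorem hermiteCubic_one : hermiteCubic a₀ a₁ a₂ a₃ 1 = a₀ + a₁ + a₂ := by
  simp only [hermiteCubic, one_pow, one_smul]
  module

@[simp]
theorem hermiteCubicDeriv_zero : hermiteCubicDeriv a₁ a₂ a₃ 0 = a₁ := by
  simp [hermiteCubicDeriv]

@[simp]
theorem hermiteCubicDeriv_one : hermiteCubicDeriv a₁ a₂ a₃ 1 = a₁ + a₃ := by
  simp only [hermiteCubicDeriv, one_pow, mul_one]
  module

end Module

variable [NormedAddCommGroup E] [NormedSpace ℝ E] (a₀ a₁ a₂ a₃ : E)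

theorem hasDerivAt_hermiteCubic (β : ℝ) :
    HasDerivAt (hermiteCubic a₀ a₁ a₂ a₃) (hermiteCubicDeriv a₁ a₂ a₃ β) β := by
  have h3 : HasDerivAt (fun t : ℝ => t ^ 3) (3 * β ^ 2) β := by simpa using hasDerivAt_pow 3 β
  have h2 : HasDerivAt (fun t : ℝ => t ^ 2) (2 * β) β := by simpa using hasDerivAt_pow 2 β
  unfold hermiteCubic hermiteCubicDeriv
  simpa using (((h3.smul_const _).add (h2.smul_const _)).add
    ((hasDerivAt_id β).smul_const a₁)).add_const a₀

@[fun_prop]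
theorem continuous_hermiteCubicDeriv : Continuous (hermiteCubicDeriv a₁ a₂ a₃) := by
  unfold hermiteCubicDeriv
  fun_prop

theorem HasDerivAt.hermiteCubic_comp {φ : ℝ → ℝ} {φ' x : ℝ} (hφ : HasDerivAt φ φ' x) :
    HasDerivAt (fun t => hermiteCubic a₀ a₁ a₂ a₃ (φ t))
      (φ' • hermiteCubicDeriv a₁ a₂ a₃ (φ x)) x :=
  (hasDerivAt_hermiteCubic a₀ a₁ a₂ a₃ (φ x)).scomp x hφ

end HermiteCubic

section Gluing

variable {E : Type*} [NormedAddCommGroup E] [NormedSpace ℝ E]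
  {f g f' g' : ℝ → E} {c : ℝ}

theorem hasDerivAt_if_le (hf : ∀ x, HasDerivAt f (f' x) x) (hg : ∀ x, HasDerivAt g (g' x) x)
    (hfg : f c = g c) (hfg' : f' c = g' c) (x : ℝ) :
    HasDerivAt (fun y => if y ≤ c then f y else g y) (if x ≤ c then f' x else g' x) x := by
  rcases lt_trichotomy x c with hlt | rfl | hgt
  · rw [if_pos hlt.le]
    refine (hf x).congr_of_eventuallyEq ?_
    filter_upwards [Iio_mem_nhds hlt] with y hy
    exact if_pos (le_of_lt hy)
  · rw [if_pos le_rfl]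
    have hleft : HasDerivWithinAt (fun y => if y ≤ x then f y else g y) (f' x) (Iic x) x :=
      (hf x).hasDerivWithinAt.congr (fun y hy => if_pos hy) (if_pos le_rfl)
    have hright : HasDerivWithinAt (fun y => if y ≤ x then f y else g y) (f' x) (Ici x) x := by
      refine hfg' ▸ (hg x).hasDerivWithinAt.congr (fun y hy => ?_) (by simp [hfg])
      rcases (mem_Ici.mp hy).eq_or_lt with rfl | hxy
      · simp [hfg]
      · exact if_neg (not_le.2 hxy)
    simpa [Iic_union_Ici] using hleft.union hright
  · rw [if_neg (not_le.2 hgt)]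
    refine (hg x).congr_of_eventuallyEq ?_
    filter_upwards [Ioi_mem_nhds hgt] with y hy
    exact if_neg (not_le.2 hy)

theorem exists_continuous_hasDerivAt_if_le (hf : ∀ x, HasDerivAt f (f' x) x)
    (hg : ∀ x, HasDerivAt g (g' x) x) (hf' : Continuous f') (hg' : Continuous g')
    (hfg : f c = g c) (hfg' : f' c = g' c) :
    ∃ G : ℝ → E, Continuous G ∧ (∀ x ≤ c, G x = f' x) ∧ (∀ x, c ≤ x → G x = g' x) ∧
      ∀ x, HasDerivAt (fun y => if y ≤ c then f y else g y) (G x) x := by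
  refine ⟨fun x => if x ≤ c then f' x else g' x,
    hf'.if_le hg' continuous_id continuous_const fun x (hx : x = c) => hx ▸ hfg',
    fun x hx => if_pos hx, fun x hx => ?_, hasDerivAt_if_le hf hg hfg hfg'⟩
  rcases hx.eq_or_lt with rfl | hlt
  · exact (if_pos le_rfl).trans hfg'
  · exact if_neg (not_le.2 hlt)

end Gluing

theorem mul_inv_smul_smul₀ {E : Type*} [AddCommGroup E] [Module ℝ E] {a : ℝ} (ha : a ≠ 0)
    (b : ℝ) (v : E) : (a * b)⁻¹ • a • v = b⁻¹ • v := by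
  rw [mul_comm a, mul_inv, mul_smul, inv_smul_smul₀ ha]

theorem trbdf2_dense_output_C1_general (m : ℕ) (h γ : ℝ)
    (hh : 0 < h) (hγ : γ ∈ Set.Ioo (0 : ℝ) 1)
    (un ug u1 zn zg z1 : Fin m → ℝ)
    (p q : ℝ → Fin m → ℝ)
    (hp : ∀ ζ : ℝ, p ζ = (ζ / (γ * h)) ^ 3 • (γ • (zg - zn) - (2 : ℝ) • (ug - un - γ • zn))
        + (ζ / (γ * h)) ^ 2 • ((3 : ℝ) • (ug - un - γ • zn) - γ • (zg - zn))
        + (ζ / (γ * h)) • (γ • zn) + un)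
    (hq : ∀ ζ : ℝ, q ζ = ((ζ - γ * h) / ((1 - γ) * h)) ^ 3 •
          ((1 - γ) • (z1 - zg) - (2 : ℝ) • (u1 - ug - (1 - γ) • zg))
        + ((ζ - γ * h) / ((1 - γ) * h)) ^ 2 •
          ((3 : ℝ) • (u1 - ug - (1 - γ) • zg) - (1 - γ) • (z1 - zg))
        + ((ζ - γ * h) / ((1 - γ) * h)) • ((1 - γ) • zg) + ug)
    (Q : ℝ → Fin m → ℝ)
    (hQ : ∀ ζ : ℝ, Q ζ = if ζ ≤ γ * h then p ζ else q ζ) :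
    p (γ * h) = q (γ * h) ∧
      ∃ g : ℝ → Fin m → ℝ, ContinuousOn g (Set.Icc 0 h) ∧
        (∀ ζ ∈ Set.Icc 0 (γ * h), g ζ = deriv p ζ) ∧
        (∀ ζ ∈ Set.Icc (γ * h) h, g ζ = deriv q ζ) ∧
        ∀ ζ ∈ Set.Icc 0 h, HasDerivWithinAt Q (g ζ) (Set.Icc 0 h) ζ := by
  obtain ⟨hγ0, hγ1⟩ := hγ
  have hγh : γ * h ≠ 0 := (mul_pos hγ0 hh).ne'
  have hp_eq : p = fun ζ => hermiteCubic un (γ • zn) (ug - un - γ • zn) (γ • (zg - zn))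
      (ζ / (γ * h)) := funext hp
  have hq_eq : q = fun ζ => hermiteCubic ug ((1 - γ) • zg) (u1 - ug - (1 - γ) • zg)
      ((1 - γ) • (z1 - zg)) ((ζ - γ * h) / ((1 - γ) * h)) := funext hq
  set p' := fun ζ => (1 / (γ * h)) • hermiteCubicDeriv (γ • zn) (ug - un - γ • zn)
    (γ • (zg - zn)) (ζ / (γ * h))
  set q' := fun ζ => (1 / ((1 - γ) * h)) • hermiteCubicDeriv ((1 - γ) • zg)
    (u1 - ug - (1 - γ) • zg) ((1 - γ) • (z1 - zg)) ((ζ - γ * h) / ((1 - γ) * h))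
  have hp' (ζ : ℝ) : HasDerivAt p (p' ζ) ζ :=
    hp_eq ▸ ((hasDerivAt_id ζ).div_const (γ * h)).hermiteCubic_comp un _ _ _
  have hq' (ζ : ℝ) : HasDerivAt q (q' ζ) ζ :=
    hq_eq ▸ (((hasDerivAt_id ζ).sub_const (γ * h)).div_const ((1 - γ) * h)).hermiteCubic_comp
      ug _ _ _
  have hpq : p (γ * h) = q (γ * h) := by
    simp only [hp_eq, hq_eq, sub_self, zero_div, div_self hγh, hermiteCubic_one, hermiteCubic_zero]
    abel
  have hpq' : p' (γ * h) = q' (γ * h) := by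
    have hzg : γ • zn + γ • (zg - zn) = γ • zg := by module
    simp only [p', q', sub_self, zero_div, div_self hγh, hermiteCubicDeriv_one,
      hermiteCubicDeriv_zero, hzg, one_div, mul_inv_smul_smul₀ hγ0.ne',
      mul_inv_smul_smul₀ (sub_pos.2 hγ1).ne']
  obtain ⟨g, hg, hgp, hgq, hQ'⟩ :=
    exists_continuous_hasDerivAt_if_le hp' hq' (by fun_prop) (by fun_prop) hpq hpq'
  refine ⟨hpq, g, hg.continuousOn, fun ζ hζ => ?_, fun ζ hζ => ?_, fun ζ _ => ?_⟩
  · rw [hgp ζ hζ.2, (hp' ζ).deriv]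
  · rw [hgq ζ hζ.1, (hq' ζ).deriv]
  · exact funext hQ ▸ (hQ' ζ).hasDerivWithinAt

/-- The piecewise-cubic TR-BDF2 dense-output interpolant is well defined and
globally `C¹` on `[0, h]`: the two Hermite cubics match at `ζ = γh` and there is
a continuous function `g`, equal to `p'` on `[0, γh]` and to `q'` on `[γh, h]`,
which is the derivative of the interpolant at every point of `[0, h]`. -/
theorem trbdf2_dense_output_C1 (m : ℕ) (hm : 1 ≤ m) (h γ : ℝ)
    (hh : 0 < h) (hγ : γ ∈ Set.Ioo (0 : ℝ) 1)
    (un ug u1 zn zg z1 : Fin m → ℝ)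
    (p q : ℝ → Fin m → ℝ)
    (hp : ∀ ζ : ℝ, p ζ = (ζ / (γ * h)) ^ 3 • (γ • (zg - zn) - (2 : ℝ) • (ug - un - γ • zn))
        + (ζ / (γ * h)) ^ 2 • ((3 : ℝ) • (ug - un - γ • zn) - γ • (zg - zn))
        + (ζ / (γ * h)) • (γ • zn) + un)
    (hq : ∀ ζ : ℝ, q ζ = ((ζ - γ * h) / ((1 - γ) * h)) ^ 3 •
          ((1 - γ) • (z1 - zg) - (2 : ℝ) • (u1 - ug - (1 - γ) • zg))
        + ((ζ - γ * h) / ((1 - γ) * h)) ^ 2 •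
          ((3 : ℝ) • (u1 - ug - (1 - γ) • zg) - (1 - γ) • (z1 - zg))
        + ((ζ - γ * h) / ((1 - γ) * h)) • ((1 - γ) • zg) + ug)
    (Q : ℝ → Fin m → ℝ)
    (hQ : ∀ ζ : ℝ, Q ζ = if ζ ≤ γ * h then p ζ else q ζ) :
    p (γ * h) = q (γ * h) ∧
      ∃ g : ℝ → Fin m → ℝ, ContinuousOn g (Set.Icc 0 h) ∧
        (∀ ζ ∈ Set.Icc 0 (γ * h), g ζ = deriv p ζ) ∧
        (∀ ζ ∈ Set.Icc (γ * h) h, g ζ = deriv q ζ) ∧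
        ∀ ζ ∈ Set.Icc 0 h, HasDerivWithinAt Q (g ζ) (Set.Icc 0 h) ζ :=
  trbdf2_dense_output_C1_general m h γ hh hγ un ug u1 zn zg z1 p q hp hq Q hQ
end

section
/- Let p, q ≥ 1 and m = p + q. Let E be a real m×p matrix, E⊥ a real m×q matrix, P a real p×m matrix and P⊥ a real q×m matrix satisfying P·E = I_p, P⊥·E⊥ = I_q and E·P + E⊥·P⊥ = I_m. Let D, N, Q, R be real m×m matrices and assume P·D·E is invertible. Suppose u, u¹, u², v ∈ ℝᵐ satisfy: (i) P·D·(E·P·u¹ + E⊥·P⊥·Q·u) = P·N·u; (ii) P·D·(E·P·u² + E⊥·P⊥·R·u) = P·N·(E·P·u¹ + E⊥·P⊥·Q·u); (iii) v = E·P·u² + E⊥·P⊥·R·u. Then v = R_mr·u, where, writing S = (P·D·E)⁻¹, R_mr = E·[ S·(P·N·E)·S·(P·N − (P·D·E⊥)·P⊥·Q) + S·(P·N·E⊥)·P⊥·Q − S·(P·D·E⊥)·P⊥·R ] + E⊥·P⊥·R. Thus the multirate step with one halving of the time step is a linear map with the explicit stability matrix R_mr. -/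
/-!
Each micro-step is a linear system for the active components `P u` whose matrix is `P D E`:
splitting the argument of `P D` as `E (P w) + c` moves the known latent contribution `c` to the
right-hand side, so `P u₁` and then `P u₂` are obtained by applying `(P D E)⁻¹`. Substituting
both into `v = E (P u₂) + E' P' R u` and expanding gives `R_mr`.
-/

open Matrix

theorem mulVec_eq_inv_mulVec_sub_of_implicit_step {m n K : Type*} [Fintype m] [Fintype n]
    [DecidableEq n] [CommRing K] {P : Matrix n m K} {D : Matrix m m K} {E : Matrix m n K}
    (hinv : IsUnit (P * D * E)) {w c : m → K} {b : n → K}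
    (h : (P * D) *ᵥ ((E * P) *ᵥ w + c) = b) :
    P *ᵥ w = (P * D * E)⁻¹ *ᵥ (b - (P * D) *ᵥ c) := by
  have hsolve : (P * D * E) *ᵥ (P *ᵥ w) = b - (P * D) *ᵥ c := by
    rw [← h, mulVec_add, add_sub_cancel_right, mulVec_mulVec, mulVec_mulVec, Matrix.mul_assoc]
  rw [← hsolve, mulVec_mulVec, nonsing_inv_mul _ ((isUnit_iff_isUnit_det _).mp hinv),
    one_mulVec]

theorem multirate_stability_matrix_general (p q : ℕ)
    (E : Matrix (Fin (p + q)) (Fin p) ℝ) (E' : Matrix (Fin (p + q)) (Fin q) ℝ)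
    (P : Matrix (Fin p) (Fin (p + q)) ℝ) (P' : Matrix (Fin q) (Fin (p + q)) ℝ)
    (D N Q R : Matrix (Fin (p + q)) (Fin (p + q)) ℝ)
    (hinv : IsUnit (P * D * E))
    (u u₁ u₂ v : Fin (p + q) → ℝ)
    (hstep1 : (P * D) *ᵥ ((E * P) *ᵥ u₁ + (E' * P' * Q) *ᵥ u) = (P * N) *ᵥ u)
    (hstep2 : (P * D) *ᵥ ((E * P) *ᵥ u₂ + (E' * P' * R) *ᵥ u)
        = (P * N) *ᵥ ((E * P) *ᵥ u₁ + (E' * P' * Q) *ᵥ u))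
    (hv : v = (E * P) *ᵥ u₂ + (E' * P' * R) *ᵥ u) :
    v = (E * ((P * D * E)⁻¹ * (P * N * E) * (P * D * E)⁻¹ * (P * N - (P * D * E') * P' * Q)
          + (P * D * E)⁻¹ * (P * N * E') * P' * Q
          - (P * D * E)⁻¹ * (P * D * E') * P' * R)
        + E' * P' * R) *ᵥ u := by
  have hu₁ := mulVec_eq_inv_mulVec_sub_of_implicit_step hinv hstep1
  have hu₂ := mulVec_eq_inv_mulVec_sub_of_implicit_step hinv hstep2
  have hsplit (w : Fin (p + q) → ℝ) : (E * P) *ᵥ w = E *ᵥ (P *ᵥ w) := (mulVec_mulVec w E P).symm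
  rw [hv, hsplit, hu₂, hsplit, hu₁]
  simp only [mulVec_add, mulVec_sub, mulVec_mulVec, Matrix.mul_add,
    Matrix.mul_sub, add_mulVec, sub_mulVec, Matrix.mul_assoc]

/-- The stability matrix of the self-adjusting multirate method with one
halving of the time step: the multirate step `uⁿ ↦ u^{n+1}` is the linear map
given by the explicit matrix `R_mr`. -/
theorem multirate_stability_matrix (p q : ℕ) (hp : 1 ≤ p) (hq : 1 ≤ q)
    (E : Matrix (Fin (p + q)) (Fin p) ℝ) (E' : Matrix (Fin (p + q)) (Fin q) ℝ)
    (P : Matrix (Fin p) (Fin (p + q)) ℝ) (P' : Matrix (Fin q) (Fin (p + q)) ℝ)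
    (hPE : P * E = 1) (hP'E' : P' * E' = 1) (hEP : E * P + E' * P' = 1)
    (D N Q R : Matrix (Fin (p + q)) (Fin (p + q)) ℝ)
    (hinv : IsUnit (P * D * E))
    (u u₁ u₂ v : Fin (p + q) → ℝ)
    (hstep1 : (P * D) *ᵥ ((E * P) *ᵥ u₁ + (E' * P' * Q) *ᵥ u) = (P * N) *ᵥ u)
    (hstep2 : (P * D) *ᵥ ((E * P) *ᵥ u₂ + (E' * P' * R) *ᵥ u)
        = (P * N) *ᵥ ((E * P) *ᵥ u₁ + (E' * P' * Q) *ᵥ u))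
    (hv : v = (E * P) *ᵥ u₂ + (E' * P' * R) *ᵥ u) :
    v = (E * ((P * D * E)⁻¹ * (P * N * E) * (P * D * E)⁻¹ * (P * N - (P * D * E') * P' * Q)
          + (P * D * E)⁻¹ * (P * N * E') * P' * Q
          - (P * D * E)⁻¹ * (P * D * E') * P' * R)
        + E' * P' * R) *ᵥ u :=
  multirate_stability_matrix_general p q E E' P P' D N Q R hinv u u₁ u₂ v hstep1 hstep2 hv
end
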